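/- Let n > k > 0 be integers and let F be a pointwise-increasing family of k-element subsets of [n]. Then U_A(F) = {x ∈ [n] : Bob(F_x^+)} is an upper interval of [n] (i.e., if x ∈ U_A(F) and x ≤ y ≤ n then y ∈ U_A(F)), and L_A(F) = {x ∈ [n] : Bob(F_x^-)} is a lower interval of [n] (i.e., if x ∈ L_A(F) and 1 ≤ y ≤ x then y ∈ L_A(F)). -/

import Mathlib

/-- The board `[n] = {1, …, n}` as a finite set of natural numbers. -/
def board (n : ℕ) : Finset ℕ := Finset.Icc 1 n

/-- The order-preserving relabelling of `[n] \ {x}` onto `[n-1]`: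
elements below `x` are unchanged, elements above `x` drop by one. -/
def stdElt (x r : ℕ) : ℕ := if r < x then r else r - 1

/-- Standardise a set avoiding `x`: relabel it via `stdElt x`. -/
def stdSet (x : ℕ) (S : Finset ℕ) : Finset ℕ := S.image (stdElt x)

/-- The standardised section `F_x^+ = { S \ {x} : x ∈ S ∈ F }`,
viewed as a family of subsets of `[n-1]`. -/
def secPlus (F : Set (Finset ℕ)) (x : ℕ) : Set (Finset ℕ) :=
  {T | ∃ S ∈ F, x ∈ S ∧ T = stdSet x (S.erase x)}

/-- The standardised section `F_x^- = { S ∈ F : x ∉ S }`,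
viewed as a family of subsets of `[n-1]`. -/
def secMinus (F : Set (Finset ℕ)) (x : ℕ) : Set (Finset ℕ) :=
  {T | ∃ S ∈ F, x ∉ S ∧ T = stdSet x S}

mutual
  /-- `AliceWins n k F`: Alice wins her `F`-game, where `F` is a family of
  `k`-subsets of `[n]`.  Terminal games (`k = 0` or `k = n`) are won iff `F`
  is nonempty; otherwise Alice needs a first offer `x` such that Bob wins both
  his `F_x^+`-game and his `F_x^-`-game. -/
  def AliceWins (n k : ℕ) (F : Set (Finset ℕ)) : Prop :=
    if h : k = 0 ∨ n ≤ k then F.Nonempty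
    else ∃ x ∈ board n,
      BobWins (n - 1) (k - 1) (secPlus F x) ∧ BobWins (n - 1) k (secMinus F x)
  termination_by n
  decreasing_by all_goals omega

  /-- `BobWins n k F`: Bob wins his `F`-game, where `F` is a family of
  `k`-subsets of `[n]`.  Terminal games (`k = 0` or `k = n`) are won iff `F`
  is nonempty; otherwise Bob needs, for every first offer `x`, that Alice wins
  her `F_x^+`-game or her `F_x^-`-game. -/
  def BobWins (n k : ℕ) (F : Set (Finset ℕ)) : Prop :=
    if h : k = 0 ∨ n ≤ k then F.Nonempty
    else ∀ x ∈ board n,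
      AliceWins (n - 1) (k - 1) (secPlus F x) ∨ AliceWins (n - 1) k (secMinus F x)
  termination_by n
  decreasing_by all_goals omega
end

/-- `S ⪯ T` in the pointwise order: the increasing enumerations of `S` and `T`
have the same length and are pointwise `≤`. -/
def PointwiseLE (S T : Finset ℕ) : Prop :=
  List.Forall₂ (· ≤ ·) (S.sort (· ≤ ·)) (T.sort (· ≤ ·))

/-- `F` consists of `k`-element subsets of `[n]`. -/
def IsFamilyOn (n k : ℕ) (F : Set (Finset ℕ)) : Prop :=
  ∀ S ∈ F, S ⊆ board n ∧ S.card = k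

/-- `F` is pointwise-increasing as a family of `k`-subsets of `[n]`:
it is upwards closed in the pointwise order. -/
def IsIncreasingFamily (n k : ℕ) (F : Set (Finset ℕ)) : Prop :=
  ∀ S T : Finset ℕ, S ∈ F → T ⊆ board n → T.card = k → PointwiseLE S T → T ∈ F


/-!
Winning is monotone in the family: enlarging `F` enlarges both sections at every first offer, so
by induction on `n` neither player can lose by enlarging `F`. It therefore suffices to show
`F_x^+ ⊆ F_{x+1}^+` and `F_{x+1}^- ⊆ F_x^-`. In both cases the witness is the image of a set
`S ∈ F` under the transposition of `x` and `x + 1`: it lies pointwise above `S`, hence in `F`, and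
standardising it at the neighbouring point gives the same set.
-/

lemma secPlus_mono {F G : Set (Finset ℕ)} (h : F ⊆ G) (x : ℕ) : secPlus F x ⊆ secPlus G x := by
  rintro T ⟨S, hS, hx, rfl⟩
  exact ⟨S, h hS, hx, rfl⟩

lemma secMinus_mono {F G : Set (Finset ℕ)} (h : F ⊆ G) (x : ℕ) : secMinus F x ⊆ secMinus G x := by
  rintro T ⟨S, hS, hx, rfl⟩
  exact ⟨S, h hS, hx, rfl⟩

lemma aliceWins_mono_and_bobWins_mono (n k : ℕ) {F G : Set (Finset ℕ)} (h : F ⊆ G) :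
    (AliceWins n k F → AliceWins n k G) ∧ (BobWins n k F → BobWins n k G) := by
  induction n using Nat.strong_induction_on generalizing k F G with
  | _ n ih =>
    constructor
    · intro hA
      rw [AliceWins] at hA ⊢
      split_ifs at hA ⊢ with hterm
      · exact hA.mono h
      · have hn : n - 1 < n := by omega
        obtain ⟨x, hx, hplus, hminus⟩ := hA
        exact ⟨x, hx, (ih _ hn _ (secPlus_mono h x)).2 hplus,
          (ih _ hn _ (secMinus_mono h x)).2 hminus⟩
    · intro hB
      rw [BobWins] at hB ⊢
      split_ifs at hB ⊢ with hterm
      · exact hB.mono h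
      · have hn : n - 1 < n := by omega
        exact fun x hx => (hB x hx).imp (ih _ hn _ (secPlus_mono h x)).1
          (ih _ hn _ (secMinus_mono h x)).1

lemma BobWins.mono {n k : ℕ} {F G : Set (Finset ℕ)} (h : F ⊆ G) (hF : BobWins n k F) :
    BobWins n k G :=
  (aliceWins_mono_and_bobWins_mono n k h).2 hF

lemma PointwiseLE.refl (S : Finset ℕ) : PointwiseLE S S :=
  List.forall₂_refl _

lemma pointwiseLE_map_of_strictMonoOn {S : Finset ℕ} {f : ℕ ↪ ℕ} (hf : StrictMonoOn f S)
    (hle : ∀ s ∈ S, s ≤ f s) : PointwiseLE S (S.map f) := by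
  rw [PointwiseLE, ← hf.map_finsetSort, List.forall₂_map_right_iff, List.forall₂_same]
  exact fun s hs => hle s ((Finset.mem_sort _).1 hs)

lemma pointwiseLE_map_swap {S : Finset ℕ} {x : ℕ} (h : x + 1 ∈ S → x ∈ S) :
    PointwiseLE S (S.map (Equiv.swap x (x + 1) : ℕ ↪ ℕ)) := by
  by_cases hx1 : x + 1 ∈ S
  · rw [Finset.map_perm]
    · exact PointwiseLE.refl S
    · intro r hr
      rcases Equiv.swap_apply_ne_self_iff.1 hr with ⟨-, rfl | rfl⟩
      exacts [h hx1, hx1]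
  · apply pointwiseLE_map_of_strictMonoOn
    · intro a ha b hb hab
      have : a ≠ x + 1 := ne_of_mem_of_not_mem ha hx1
      have : b ≠ x + 1 := ne_of_mem_of_not_mem hb hx1
      simp only [Equiv.coe_toEmbedding, Equiv.swap_apply_def]
      split_ifs <;> omega
    · intro s hs
      have : s ≠ x + 1 := ne_of_mem_of_not_mem hs hx1
      simp only [Equiv.coe_toEmbedding, Equiv.swap_apply_def]
      split_ifs <;> omega

lemma IsIncreasingFamily.map_swap_mem {n k : ℕ} {F : Set (Finset ℕ)} (hF : IsFamilyOn n k F)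
    (hinc : IsIncreasingFamily n k F) {S : Finset ℕ} (hS : S ∈ F) {x : ℕ} (hxn : x + 1 ≤ n)
    (h : x + 1 ∈ S → x ∈ S) : S.map (Equiv.swap x (x + 1) : ℕ ↪ ℕ) ∈ F := by
  obtain ⟨hSn, hSk⟩ := hF S hS
  refine hinc S _ hS ?_ (by rwa [Finset.card_map]) (pointwiseLE_map_swap h)
  intro t ht
  obtain ⟨r, hr, rfl⟩ := Finset.mem_map.1 ht
  have hrn := Finset.mem_Icc.1 (hSn hr)
  simp only [Equiv.coe_toEmbedding, Equiv.swap_apply_def]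
  split_ifs with hrx hrx1
  · exact Finset.mem_Icc.2 ⟨by omega, hxn⟩
  · exact hSn (h (hrx1 ▸ hr))
  · exact hSn hr

lemma stdElt_succ_swap {x r : ℕ} (hr : r ≠ x) :
    stdElt (x + 1) (Equiv.swap x (x + 1) r) = stdElt x r := by
  unfold stdElt
  rw [Equiv.swap_apply_def]
  split_ifs <;> omega

lemma stdSet_succ_map_swap {x : ℕ} {S : Finset ℕ} (hx : x ∉ S) :
    stdSet (x + 1) (S.map (Equiv.swap x (x + 1) : ℕ ↪ ℕ)) = stdSet x S := by
  rw [stdSet, stdSet, Finset.map_eq_image, Finset.image_image]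
  exact Finset.image_congr fun r hr => stdElt_succ_swap (ne_of_mem_of_not_mem hr hx)

section IncreasingFamily

variable {n k : ℕ} {F : Set (Finset ℕ)}

lemma secPlus_subset_secPlus_succ (hF : IsFamilyOn n k F) (hinc : IsIncreasingFamily n k F)
    {x : ℕ} (hxn : x + 1 ≤ n) :
    secPlus F x ⊆ secPlus F (x + 1) := by
  rintro T ⟨S, hS, hxS, rfl⟩
  refine ⟨_, hinc.map_swap_mem hF hS hxn fun _ => hxS, by simpa using hxS, ?_⟩
  have herase : (S.map (Equiv.swap x (x + 1) : ℕ ↪ ℕ)).erase (x + 1) =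
      (S.erase x).map (Equiv.swap x (x + 1) : ℕ ↪ ℕ) := by
    rw [Finset.map_erase, Equiv.coe_toEmbedding, Equiv.swap_apply_left]
  rw [herase, stdSet_succ_map_swap (Finset.notMem_erase x S)]

lemma secMinus_succ_subset_secMinus (hF : IsFamilyOn n k F) (hinc : IsIncreasingFamily n k F)
    {x : ℕ} (hxn : x + 1 ≤ n) :
    secMinus F (x + 1) ⊆ secMinus F x := by
  rintro T ⟨S, hS, hxS, rfl⟩
  have hx : x ∉ S.map (Equiv.swap x (x + 1) : ℕ ↪ ℕ) := by simpa using hxS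
  refine ⟨_, hinc.map_swap_mem hF hS hxn (absurd · hxS), hx, ?_⟩
  rw [← stdSet_succ_map_swap hx]
  congr 1
  ext t
  simp

lemma monotoneOn_secPlus (hF : IsFamilyOn n k F) (hinc : IsIncreasingFamily n k F) :
    MonotoneOn (secPlus F) (Set.Iic n) :=
  monotoneOn_of_le_succ Set.ordConnected_Iic fun x _ _ hx1 => by
    rw [Order.succ_eq_add_one] at hx1 ⊢
    exact secPlus_subset_secPlus_succ hF hinc hx1

lemma antitoneOn_secMinus (hF : IsFamilyOn n k F) (hinc : IsIncreasingFamily n k F) :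
    AntitoneOn (secMinus F) (Set.Iic n) :=
  antitoneOn_of_succ_le Set.ordConnected_Iic fun x _ _ hx1 => by
    rw [Order.succ_eq_add_one] at hx1 ⊢
    exact secMinus_succ_subset_secMinus hF hinc hx1

end IncreasingFamily

/-- for an increasing family `F`, the set
`U_A(F) = {x ∈ [n] : Bob(F_x^+)}` is an upper interval of `[n]`, and
`L_A(F) = {x ∈ [n] : Bob(F_x^-)}` is a lower interval of `[n]`. -/
theorem UA_upper_LA_lower (n k : ℕ) (hk : 0 < k) (hkn : k < n)
    (F : Set (Finset ℕ)) (hF : IsFamilyOn n k F)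
    (hinc : IsIncreasingFamily n k F) :
    (∀ x y : ℕ, x ∈ board n → y ∈ board n → x ≤ y →
      BobWins (n - 1) (k - 1) (secPlus F x) → BobWins (n - 1) (k - 1) (secPlus F y)) ∧
    (∀ x y : ℕ, x ∈ board n → y ∈ board n → y ≤ x →
      BobWins (n - 1) k (secMinus F x) → BobWins (n - 1) k (secMinus F y)) := by
  have mem_Iic {x : ℕ} (hx : x ∈ board n) : x ∈ Set.Iic n := (Finset.mem_Icc.1 hx).2
  exact ⟨fun x y hx hy hxy =>
      BobWins.mono (monotoneOn_secPlus hF hinc (mem_Iic hx) (mem_Iic hy) hxy),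
    fun x y hx hy hyx =>
      BobWins.mono (antitoneOn_secMinus hF hinc (mem_Iic hy) (mem_Iic hx) hyx)⟩
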